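/- arXiv:1606.02360 — 3 statements merged into one kernel-verified Lean document; each statement's English description precedes it below -/
import Mathlib

section
/- The function g is strictly increasing on ℝ: for all r_1, r_2 ∈ ℝ with r_1 < r_2, g(r_1) < g(r_2). -/
noncomputable section

/-- The constant `a = (4π²n + 3π²)/2`. -/
def a (n : ℕ) : ℝ := (4 * Real.pi ^ 2 * n + 3 * Real.pi ^ 2) / 2

/-- The function `g` from the example. -/
def g (n : ℕ) (r : ℝ) : ℝ :=
  if |r| ≤ a n then
    Real.tanh (2 * r) +
      ∑ i ∈ Finset.Icc 1 n,
        Real.sign r * (1 + Real.sign r * Real.tanh (2 * (r - Real.sign r * (2 * Real.pi ^ 2 * i))))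
  else
    Real.sign r * ((2 * n + 1) + (r - Real.sign r * a n) ^ 2)

/- ### Auxiliary lemmas about `tanh` -/

lemma tanh_eq' (x : ℝ) : Real.tanh x = 1 - 2/(Real.exp (2*x) + 1) := by
  rw [Real.tanh_eq_sinh_div_cosh, Real.sinh_eq, Real.cosh_eq]
  have h1 : Real.exp (2*x) = Real.exp x * Real.exp x := by
    rw [← Real.exp_add]; ring_nf
  have h2 : Real.exp (-x) = (Real.exp x)⁻¹ := Real.exp_neg x
  have h3 : (0:ℝ) < Real.exp x := Real.exp_pos x
  have h4 : (0:ℝ) < Real.exp x * Real.exp x + 1 := by positivity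
  rw [h1, h2]
  field_simp
  ring

lemma tanh_lt_one' (x : ℝ) : Real.tanh x < 1 := by
  rw [tanh_eq']
  have : (0:ℝ) < 2/(Real.exp (2*x) + 1) := by positivity
  linarith

lemma neg_one_lt_tanh' (x : ℝ) : -1 < Real.tanh x := by
  rw [tanh_eq']
  have h : (0:ℝ) < Real.exp (2*x) := Real.exp_pos _
  have : 2/(Real.exp (2*x) + 1) < 2 := by
    rw [div_lt_iff₀ (by positivity)]; nlinarith
  linarith

lemma tanh_strictMono' : StrictMono Real.tanh := by
  intro x y hxy
  rw [tanh_eq', tanh_eq']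
  have h1 : (0:ℝ) < Real.exp (2*x) + 1 := by positivity
  have h2 : Real.exp (2*x) < Real.exp (2*y) := by
    apply Real.exp_lt_exp.2; linarith
  have : 2/(Real.exp (2*y) + 1) < 2/(Real.exp (2*x) + 1) := by
    apply div_lt_div_of_pos_left (by norm_num) h1 (by linarith)
  linarith

lemma tanh_pos' {x : ℝ} (hx : 0 < x) : 0 < Real.tanh x := by
  have := tanh_strictMono' hx
  rwa [Real.tanh_zero] at this

/- ### The inner formula for positive `r` -/

/-- The inner formula of `g` for positive `r`. -/
def S (n : ℕ) (r : ℝ) : ℝ :=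
  Real.tanh (2*r) + ∑ i ∈ Finset.Icc 1 n, (1 + Real.tanh (2*(r - 2*Real.pi^2*i)))

lemma a_pos (n : ℕ) : 0 < a n := by
  have := Real.pi_pos
  unfold a
  positivity

lemma g_zero (n : ℕ) : g n 0 = 0 := by
  unfold g
  rw [if_pos (by simpa using (a_pos n).le)]
  simp [Real.sign_zero]

lemma g_eq_S {n : ℕ} {r : ℝ} (hr : 0 < r) (hra : r ≤ a n) : g n r = S n r := by
  unfold g S
  rw [if_pos (by rwa [abs_of_pos hr]), Real.sign_of_pos hr]
  simp

lemma g_eq_outer {n : ℕ} {r : ℝ} (hr : a n < r) : g n r = (2*n+1) + (r - a n)^2 := by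
  unfold g
  rw [if_neg (by rw [abs_of_pos ((a_pos n).trans hr)]; linarith),
    Real.sign_of_pos ((a_pos n).trans hr)]
  ring

lemma S_strictMono (n : ℕ) : StrictMono (S n) := by
  intro x y hxy
  unfold S
  apply add_lt_add_of_lt_of_le
  · exact tanh_strictMono' (by linarith)
  · apply Finset.sum_le_sum
    intro i _
    have := (tanh_strictMono'
      (show 2*(x - 2*Real.pi^2*i) < 2*(y - 2*Real.pi^2*i) by linarith)).le
    linarith

lemma S_pos {n : ℕ} {r : ℝ} (hr : 0 < r) : 0 < S n r := by
  unfold S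
  have h1 : 0 < Real.tanh (2*r) := tanh_pos' (by linarith)
  have h2 : 0 ≤ ∑ i ∈ Finset.Icc 1 n, (1 + Real.tanh (2*(r - 2*Real.pi^2*i))) := by
    apply Finset.sum_nonneg
    intro i _
    have := neg_one_lt_tanh' (2*(r - 2*Real.pi^2*i))
    linarith
  linarith

lemma S_lt (n : ℕ) (r : ℝ) : S n r < 2*n+1 := by
  unfold S
  have h1 : Real.tanh (2*r) < 1 := tanh_lt_one' _
  have h2 : ∑ i ∈ Finset.Icc 1 n, (1 + Real.tanh (2*(r - 2*Real.pi^2*i)))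
      ≤ ∑ _i ∈ Finset.Icc 1 n, (2:ℝ) := by
    apply Finset.sum_le_sum
    intro i _
    have := (tanh_lt_one' (2*(r - 2*Real.pi^2*i))).le
    linarith
  have h3 : ∑ _i ∈ Finset.Icc 1 n, (2:ℝ) = 2*n := by
    rw [Finset.sum_const, Nat.card_Icc]
    simp
    ring
  linarith

lemma g_odd (n : ℕ) (r : ℝ) : g n (-r) = - g n r := by
  unfold g
  rw [abs_neg, Real.sign_neg]
  split_ifs with h
  · rw [neg_add, ← Finset.sum_neg_distrib]
    congr 1
    · rw [show 2*(-r) = -(2*r) by ring, Real.tanh_neg]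
    · apply Finset.sum_congr rfl
      intro i _
      rw [show 2*(-r - -Real.sign r*(2*Real.pi^2*i))
          = -(2*(r - Real.sign r*(2*Real.pi^2*i))) by ring, Real.tanh_neg]
      ring
  · rw [show -r - -Real.sign r * a n = -(r - Real.sign r * a n) by ring, neg_sq]
    ring

lemma g_pos_of_pos {n : ℕ} {r : ℝ} (hr : 0 < r) : 0 < g n r := by
  rcases le_or_gt r (a n) with h | h
  · rw [g_eq_S hr h]; exact S_pos hr
  · rw [g_eq_outer h]
    positivity

lemma g_mono_nonneg (n : ℕ) : ∀ r₁ r₂ : ℝ, 0 ≤ r₁ → r₁ < r₂ → g n r₁ < g n r₂ := by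
  intro r₁ r₂ h0 h12
  rcases eq_or_lt_of_le h0 with rfl | h0'
  · rw [g_zero]
    exact g_pos_of_pos h12
  · rcases le_or_gt r₂ (a n) with h2 | h2
    · rw [g_eq_S h0' (h12.le.trans h2), g_eq_S (h0'.trans h12) h2]
      exact S_strictMono n h12
    · rcases le_or_gt r₁ (a n) with h1 | h1
      · have b1 : g n r₁ < 2*n+1 := by rw [g_eq_S h0' h1]; exact S_lt n r₁
        have b2 : (2*(n:ℝ)+1) < g n r₂ := by
          rw [g_eq_outer h2]
          have : (0:ℝ) < (r₂ - a n)^2 := pow_pos (by linarith) 2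
          linarith
        linarith
      · rw [g_eq_outer h1, g_eq_outer h2]
        have : (r₁ - a n)^2 < (r₂ - a n)^2 := by
          apply pow_lt_pow_left₀ (by linarith) (by linarith) two_ne_zero
        linarith

/-- the function `g` is strictly increasing on `ℝ`. -/
theorem g_strictMono (n : ℕ) : ∀ r₁ r₂ : ℝ, r₁ < r₂ → g n r₁ < g n r₂ := by
  intro r₁ r₂ h
  rcases le_or_gt 0 r₁ with h1 | h1
  · exact g_mono_nonneg n r₁ r₂ h1 h
  · rcases le_or_gt r₂ 0 with h2 | h2
    · have key : g n (-r₂) < g n (-r₁) := g_mono_nonneg n _ _ (by linarith) (by linarith)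
      have e1 := g_odd n r₁
      have e2 := g_odd n r₂
      linarith
    · have a1 : g n r₁ < 0 := by
        have hp : 0 < g n (-r₁) := g_pos_of_pos (by linarith)
        rw [g_odd n r₁] at hp
        linarith
      have a2 : 0 < g n r₂ := g_pos_of_pos h2
      linarith

end
end

section
/- Dissipation inequality for the storage function V_i(x_i) = |x_i|: for every i ∈ {1,2}, every x_1, x_2 ∈ ℝ and every c_i ≥ 0, sign(x_i)·f_i(x_1, x_2) ≤ −25·g(|x_i|) + 25·h(|x_{3−i}|) + c_i². -/
noncomputable section

/-- The function `h` from the example. -/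
def h (n : ℕ) (r : ℝ) : ℝ :=
  Real.sin (r / (2 * Real.pi)) ^ 2 +
    ∑ i ∈ Finset.Icc 1 n,
      (Real.tanh (r - 2 * Real.pi ^ 2 * i) + 1) * Real.sin (r / (2 * Real.pi)) ^ 2

/-- The vector field of subsystem `i`: its own state comes first, the other
subsystem's state second; `c` stands for `‖uᵢ‖_∞ / (a + 1)`. -/
def fvec (n : ℕ) (c : ℝ) (x y : ℝ) : ℝ :=
  -(25 + c) * g n x + 25 * h n y + c ^ 2


namespace Real

theorem tanh_strictMono : StrictMono tanh := fun x y hxy => by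
  rwa [← artanh_lt_artanh_iff ⟨neg_one_lt_tanh x, tanh_lt_one x⟩
    ⟨neg_one_lt_tanh y, tanh_lt_one y⟩, artanh_tanh, artanh_tanh]

theorem tanh_nonneg {x : ℝ} (hx : 0 ≤ x) : 0 ≤ tanh x :=
  tanh_zero ▸ tanh_strictMono.monotone hx

theorem sign_le_one (x : ℝ) : sign x ≤ 1 := by
  rcases sign_apply_eq x with h | h | h <;> rw [h] <;> norm_num

end Real

theorem Function.Odd.sign_mul_eq_apply_abs {f : ℝ → ℝ} (hf : f.Odd) (x : ℝ) :
    Real.sign x * f x = f |x| := by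
  rcases lt_trichotomy x 0 with hx | rfl | hx
  · rw [Real.sign_of_neg hx, abs_of_neg hx, hf]; ring
  · rw [abs_zero, hf.map_zero, mul_zero]
  · rw [Real.sign_of_pos hx, abs_of_pos hx, one_mul]

/-- The left side is `V̇` for the storage function `V(x) = |x|` along
`ẋ = -(k + c) φ(x) + k ψ(y) + c²`. -/
theorem sign_mul_dissipation_le {φ ψ : ℝ → ℝ} (hφ : φ.Odd) (hφ_nonneg : ∀ r, 0 ≤ r → 0 ≤ φ r)
    (hψ_nonneg : ∀ r, 0 ≤ ψ r) (hψ_le : ∀ r, ψ r ≤ ψ |r|) {k c : ℝ} (hk : 0 ≤ k) (hc : 0 ≤ c)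
    (x y : ℝ) :
    Real.sign x * (-(k + c) * φ x + k * ψ y + c ^ 2) ≤ -k * φ |x| + k * ψ |y| + c ^ 2 := by
  have hφx : Real.sign x * φ x = φ |x| := hφ.sign_mul_eq_apply_abs x
  have hφ_abs : 0 ≤ φ |x| := hφ_nonneg _ (abs_nonneg x)
  have hsign : Real.sign x ≤ 1 := Real.sign_le_one x
  have hψ : Real.sign x * ψ y ≤ ψ |y| :=
    (mul_le_of_le_one_left (hψ_nonneg y) hsign).trans (hψ_le y)
  have hc2 : Real.sign x * c ^ 2 ≤ c ^ 2 := mul_le_of_le_one_left (sq_nonneg c) hsign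
  calc Real.sign x * (-(k + c) * φ x + k * ψ y + c ^ 2)
      = -(k + c) * φ |x| + k * (Real.sign x * ψ y) + Real.sign x * c ^ 2 := by
        rw [← hφx]; ring
    _ ≤ -k * φ |x| + k * ψ |y| + c ^ 2 := by
        gcongr
        nlinarith

open Real

theorem g_odd_s9 (n : ℕ) : (g n).Odd := by
  intro r
  simp only [g, abs_neg, Real.sign_neg]
  split_ifs
  · rw [neg_add, ← Finset.sum_neg_distrib, mul_neg, tanh_neg]
    congr 1
    refine Finset.sum_congr rfl fun i _ => ?_
    rw [show 2 * (-r - -Real.sign r * (2 * π ^ 2 * i))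
        = -(2 * (r - Real.sign r * (2 * π ^ 2 * i))) by ring, tanh_neg]
    ring
  · ring

theorem g_nonneg (n : ℕ) {r : ℝ} (hr : 0 ≤ r) : 0 ≤ g n r := by
  rcases hr.eq_or_lt with rfl | hr
  · exact (g_odd_s9 n).map_zero.ge
  simp only [g, Real.sign_of_pos hr, one_mul]
  split_ifs
  · have hsum : 0 ≤ ∑ i ∈ Finset.Icc 1 n, (1 + tanh (2 * (r - 2 * π ^ 2 * i))) :=
      Finset.sum_nonneg fun i _ => by linarith [neg_one_lt_tanh (2 * (r - 2 * π ^ 2 * i))]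
    linarith [tanh_nonneg (by linarith : 0 ≤ 2 * r)]
  · positivity

theorem h_nonneg (n : ℕ) (r : ℝ) : 0 ≤ h n r :=
  add_nonneg (sq_nonneg _) <| Finset.sum_nonneg fun i _ =>
    mul_nonneg (by linarith [neg_one_lt_tanh (r - 2 * π ^ 2 * i)]) (sq_nonneg _)

/-- `h` is not even, but its `sin²` factor is and its `tanh` weights are increasing. -/
theorem h_le_h_abs (n : ℕ) (r : ℝ) : h n r ≤ h n |r| := by
  rcases le_or_gt 0 r with hr | hr
  · rw [abs_of_nonneg hr]
  have hsin : sin (-r / (2 * π)) ^ 2 = sin (r / (2 * π)) ^ 2 := by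
    rw [neg_div, sin_neg, neg_sq]
  rw [abs_of_neg hr, h, h, hsin]
  gcongr with i
  exact tanh_strictMono.monotone (by linarith)

/-- dissipation inequality for the storage functions `Vᵢ(xᵢ) = |xᵢ|`:
for each `i ∈ {1,2}`, `sign(xᵢ)·fᵢ(x₁,x₂) ≤ −25·g(|xᵢ|) + 25·h(|x₃₋ᵢ|) + cᵢ²`. -/
theorem storage_dissipation (n : ℕ) (c₁ c₂ : ℝ) (hc₁ : 0 ≤ c₁) (hc₂ : 0 ≤ c₂)
    (x₁ x₂ : ℝ) :
    Real.sign x₁ * fvec n c₁ x₁ x₂ ≤ -25 * g n |x₁| + 25 * h n |x₂| + c₁ ^ 2 ∧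
    Real.sign x₂ * fvec n c₂ x₂ x₁ ≤ -25 * g n |x₂| + 25 * h n |x₁| + c₂ ^ 2 := by
  have key {c : ℝ} (hc : 0 ≤ c) (x y : ℝ) :=
    sign_mul_dissipation_le (g_odd_s9 n) (fun _ => g_nonneg n) (h_nonneg n) (h_le_h_abs n)
      (by norm_num : (0 : ℝ) ≤ 25) hc x y
  exact ⟨key hc₁ x₁ x₂, key hc₂ x₂ x₁⟩

end
end

section
/- Lower bound on the positive quadrant with gain margin: let ρ(x_1,x_2) = exp(−(x_1 + x_2)). For every ε with 0 < ε ≤ min{c_1, c_2} and all x_1 > 0, x_2 > 0, ∇ρ(x_1,x_2)·(f_1(x_1,x_2), f_2(x_1,x_2)) ≥ ρ(x_1,x_2)·[(25 + ε)·|g(x_1)| − 25·h(x_1) − c_1² + (25 + ε)·|g(x_2)| − 25·h(x_2) − c_2²]. -/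
noncomputable section

/-- The density `ρ(x₁,x₂) = e^{-(x₁+x₂)}`. -/
def ρpos : ℝ × ℝ → ℝ := fun p => Real.exp (-(p.1 + p.2))


lemma tanh_nonneg' {x : ℝ} (hx : 0 ≤ x) : 0 ≤ Real.tanh x := by
  rw [Real.tanh_eq_sinh_div_cosh]
  exact div_nonneg (Real.sinh_nonneg_iff.2 hx) (Real.cosh_pos x).le

lemma g_nonneg_s14 (n : ℕ) {x : ℝ} (hx : 0 < x) : 0 ≤ g n x := by
  have hs : Real.sign x = 1 := Real.sign_of_pos hx
  unfold g
  split
  · rw [hs]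
    have h1 : 0 ≤ Real.tanh (2 * x) := by
      exact tanh_nonneg' (by positivity)
    have h2 : 0 ≤ ∑ i ∈ Finset.Icc 1 n,
        (1 : ℝ) * (1 + 1 * Real.tanh (2 * (x - 1 * (2 * Real.pi ^ 2 * i)))) := by
      apply Finset.sum_nonneg
      intro i _
      have := neg_one_lt_tanh' (2 * (x - 1 * (2 * Real.pi ^ 2 * i)))
      nlinarith
    linarith
  · rw [hs]
    nlinarith [sq_nonneg (x - 1 * a n), Nat.cast_nonneg (α := ℝ) n]

/-- lower bound on the positive quadrant with gain margin `ε`. -/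
theorem lower_bound_positive_quadrant (n : ℕ) (c₁ c₂ : ℝ)
    (hc₁ : 0 ≤ c₁) (hc₂ : 0 ≤ c₂) (ε : ℝ) (hε : 0 < ε) (hεc : ε ≤ min c₁ c₂)
    (x₁ x₂ : ℝ) (hx₁ : 0 < x₁) (hx₂ : 0 < x₂) :
    ρpos (x₁, x₂) *
        ((25 + ε) * |g n x₁| - 25 * h n x₁ - c₁ ^ 2 +
          ((25 + ε) * |g n x₂| - 25 * h n x₂ - c₂ ^ 2)) ≤
      fderiv ℝ ρpos (x₁, x₂) (fvec n c₁ x₁ x₂, fvec n c₂ x₂ x₁) := by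
  have hd : HasFDerivAt ρpos
      (Real.exp (-(x₁ + x₂)) • (-(ContinuousLinearMap.fst ℝ ℝ ℝ + ContinuousLinearMap.snd ℝ ℝ ℝ)))
      (x₁, x₂) := by
    have h1 : HasFDerivAt (fun p : ℝ × ℝ => -(p.1 + p.2))
        (-(ContinuousLinearMap.fst ℝ ℝ ℝ + ContinuousLinearMap.snd ℝ ℝ ℝ)) (x₁, x₂) :=
      (hasFDerivAt_fst.add hasFDerivAt_snd).neg
    exact (Real.hasDerivAt_exp (-(x₁ + x₂))).comp_hasFDerivAt (x₁, x₂) h1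
  rw [hd.fderiv]
  have hg1 : 0 ≤ g n x₁ := g_nonneg_s14 n hx₁
  have hg2 : 0 ≤ g n x₂ := g_nonneg_s14 n hx₂
  have he1 : ε ≤ c₁ := le_trans hεc (min_le_left _ _)
  have he2 : ε ≤ c₂ := le_trans hεc (min_le_right _ _)
  have hexp : 0 < Real.exp (-(x₁ + x₂)) := Real.exp_pos _
  simp only [ContinuousLinearMap.smul_apply, ContinuousLinearMap.neg_apply,
    ContinuousLinearMap.add_apply, ContinuousLinearMap.coe_fst', ContinuousLinearMap.coe_snd',
    smul_eq_mul, ρpos, fvec]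
  rw [abs_of_nonneg hg1, abs_of_nonneg hg2]
  nlinarith [mul_le_mul_of_nonneg_left (mul_le_mul_of_nonneg_right he1 hg1) hexp.le,
    mul_le_mul_of_nonneg_left (mul_le_mul_of_nonneg_right he2 hg2) hexp.le]


end
end
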